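/- Let N be a finite set with n = |N| ≥ 3, and let ν be an additive measure with ν({i}) > 0 for all i ∈ N. Choose reals 0 < η_1 < η_2 < ⋯ < η_{n−1} with η_1 + ⋯ + η_{n−1} < min_{i∈N} ν({i}). Define μ(∅)=0, μ(N)=1, μ({i}) = ν({i}) − Σ_{t=1}^{n−1} η_t for singletons, and μ(A) = ν(A) − Σ_{t=|A|}^{n−1} η_t for 1 < |A| ≤ n−1. Then μ is a strictly supermodular fuzzy measure, i.e., μ(A∪B) + μ(A∩B) > μ(A) + μ(B) for all A, B ⊆ N with A∩B ≠ A and A∩B ≠ B. -/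

import Mathlib

/-! For nonempty `A`, `μ A = ν A - S |A|` with `S k = ∑_{k ≤ t < n} η_t` (also at `A = N`, where
`S n = 0`). The increments `S k - S (k+1) = η_k` strictly increase, so `-S` is a strictly convex
function of the cardinality, and adding it to the modular `ν` gives strict supermodularity: for
incomparable `A`, `B` the windows `[|A ∩ B|, |A|)` and `[|B|, |A ∪ B|)` have the same length and
the second lies strictly to the right. When `A ∩ B = ∅` one compares with `μ ∅ = 0` instead, and
`S |B| > 0` suffices. The bound `η_1 + ⋯ + η_{n-1} < ν {i}` makes `μ` positive on nonempty sets,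
hence monotone, and thus `[0, 1]`-valued. -/

open Finset

section AdditiveSetFunction

variable {α M : Type*} [DecidableEq α] [AddCommMonoid M] {ν : Finset α → M}

theorem union_add_inter_of_additive (hν : ∀ A B, Disjoint A B → ν (A ∪ B) = ν A + ν B)
    (A B : Finset α) : ν (A ∪ B) + ν (A ∩ B) = ν A + ν B := by
  have hunion : ν (A ∪ B) = ν A + ν (B \ A) := by
    rw [← hν A (B \ A) disjoint_sdiff, union_sdiff_self_eq_union]
  have hB : ν B = ν (B \ A) + ν (B ∩ A) := by
    rw [← hν _ _ (disjoint_sdiff_inter B A), sdiff_union_inter]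
  rw [hunion, hB, inter_comm, add_assoc]

theorem monotone_of_additive [PartialOrder M] [IsOrderedAddMonoid M] (hν0 : ∀ A, 0 ≤ ν A)
    (hν : ∀ A B, Disjoint A B → ν (A ∪ B) = ν A + ν B) : Monotone ν := by
  intro A B hAB
  calc ν A ≤ ν A + ν (B \ A) := le_add_of_nonneg_right (hν0 _)
    _ = ν B := by rw [← hν _ _ disjoint_sdiff, union_sdiff_of_subset hAB]

end AdditiveSetFunction

section IntervalSums

variable {M : Type*} [AddCommMonoid M] [PartialOrder M] {f : ℕ → M}

theorem antitoneOn_sum_Ico_left [IsOrderedAddMonoid M] {a m : ℕ}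
    (hf : ∀ t ∈ Ico a m, 0 ≤ f t) : AntitoneOn (fun k ↦ ∑ t ∈ Ico k m, f t) (Set.Ici a) :=
  fun _ hk _ _ hkl ↦ sum_le_sum_of_subset_of_nonneg (Ico_subset_Ico_left hkl)
    fun t ht _ ↦ hf t (Ico_subset_Ico_left hk ht)

theorem sum_Ico_lt_sum_Ico_of_strictMonoOn [IsOrderedCancelAddMonoid M] {a b c d : ℕ}
    (hf : StrictMonoOn f (Set.Ico a d)) (hab : a < b) (hac : a < c) (hsum : b + c = a + d) :
    ∑ t ∈ Ico a b, f t < ∑ t ∈ Ico c d, f t := by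
  rw [sum_Ico_eq_sum_range, sum_Ico_eq_sum_range, show d - c = b - a by omega]
  refine sum_lt_sum_of_nonempty (nonempty_range_iff.2 (by omega)) fun k hk ↦ ?_
  rw [mem_range] at hk
  exact hf ⟨by omega, by omega⟩ ⟨by omega, by omega⟩ (by omega)

end IntervalSums

section CardinalityShift

variable {ι : Type*} [Fintype ι] {ν μ : Finset ι → ℝ} {η : ℕ → ℝ}

theorem pos_of_nonempty_of_shift (hν : Monotone ν)
    (hη : ∀ t ∈ Ico 1 (Fintype.card ι), 0 ≤ η t)
    (hsingleton : ∀ i, ∑ t ∈ Ico 1 (Fintype.card ι), η t < ν {i})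
    (hμ : ∀ A, A.Nonempty → μ A = ν A - ∑ t ∈ Ico #A (Fintype.card ι), η t)
    {A : Finset ι} (hA : A.Nonempty) : 0 < μ A := by
  obtain ⟨i, hi⟩ := hA
  calc 0 < ν {i} - ∑ t ∈ Ico 1 (Fintype.card ι), η t := sub_pos.2 (hsingleton i)
    _ ≤ ν A - ∑ t ∈ Ico #A (Fintype.card ι), η t :=
      sub_le_sub (hν (singleton_subset_iff.2 hi))
        (antitoneOn_sum_Ico_left hη Set.self_mem_Ici (card_pos.2 ⟨i, hi⟩) (card_pos.2 ⟨i, hi⟩))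
    _ = μ A := (hμ A ⟨i, hi⟩).symm

theorem monotone_of_shift (hν : Monotone ν) (hη : ∀ t ∈ Ico 1 (Fintype.card ι), 0 ≤ η t)
    (hsingleton : ∀ i, ∑ t ∈ Ico 1 (Fintype.card ι), η t < ν {i}) (hμ0 : μ ∅ = 0)
    (hμ : ∀ A, A.Nonempty → μ A = ν A - ∑ t ∈ Ico #A (Fintype.card ι), η t) : Monotone μ := by
  intro A B hAB
  rcases A.eq_empty_or_nonempty with rfl | hA
  · rcases B.eq_empty_or_nonempty with rfl | hB
    · exact le_rfl
    · exact hμ0 ▸ (pos_of_nonempty_of_shift hν hη hsingleton hμ hB).le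
  · have hcard : 1 ≤ #A := card_pos.2 hA
    rw [hμ A hA, hμ B (hA.mono hAB)]
    exact sub_le_sub (hν hAB) (antitoneOn_sum_Ico_left hη hcard
      (hcard.trans (card_le_card hAB)) (card_le_card hAB))

theorem strict_supermodular_of_shift [DecidableEq ι]
    (hν : ∀ A B, Disjoint A B → ν (A ∪ B) = ν A + ν B)
    (hη : ∀ t ∈ Ico 1 (Fintype.card ι), 0 < η t)
    (hηmono : StrictMonoOn η (Set.Ico 1 (Fintype.card ι))) (hμ0 : μ ∅ = 0)
    (hμ : ∀ A, A.Nonempty → μ A = ν A - ∑ t ∈ Ico #A (Fintype.card ι), η t)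
    {A B : Finset ι} (hAB : ¬A ⊆ B) (hBA : ¬B ⊆ A) : μ A + μ B < μ (A ∪ B) + μ (A ∩ B) := by
  have hA : A.Nonempty := nonempty_iff_ne_empty.2 (by rintro rfl; exact hAB (empty_subset B))
  have hB : B.Nonempty := nonempty_iff_ne_empty.2 (by rintro rfl; exact hBA (empty_subset A))
  have hinterA : #(A ∩ B) < #A :=
    card_lt_card (inter_subset_left.ssubset_of_ne (mt inter_eq_left.1 hAB))
  have hinterB : #(A ∩ B) < #B :=
    card_lt_card (inter_subset_right.ssubset_of_ne (mt inter_eq_right.1 hBA))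
  have hcard := card_union_add_card_inter A B
  have hunion : #(A ∪ B) ≤ Fintype.card ι := card_le_univ _
  rw [hμ A hA, hμ B hB, hμ _ (hA.mono subset_union_left)]
  rcases (A ∩ B).eq_empty_or_nonempty with hI | hI
  · rw [hI, hμ0, hν A B (disjoint_iff_inter_eq_empty.2 hI)]
    rw [hI, card_empty] at hcard
    have hSB : 0 < ∑ t ∈ Ico #B (Fintype.card ι), η t :=
      sum_pos (fun t ht ↦ hη t (Ico_subset_Ico_left (card_pos.2 hB) ht))
        (nonempty_Ico.2 (by omega))
    have hSA := antitoneOn_sum_Ico_left (fun t ht ↦ (hη t ht).le)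
      (card_pos.2 hA) (by simp only [Set.mem_Ici]; omega) (by omega : #A ≤ #(A ∪ B))
    linarith
  · have hwindow := sum_Ico_lt_sum_Ico_of_strictMonoOn
      (hηmono.mono (Set.Ico_subset_Ico (card_pos.2 hI) hunion)) hinterA hinterB (by omega)
    have hsplitA := sum_Ico_consecutive η hinterA.le (card_le_univ A)
    have hsplitB := sum_Ico_consecutive η (by omega : #B ≤ #(A ∪ B)) hunion
    rw [hμ _ hI]
    linarith [union_add_inter_of_additive hν A B]

end CardinalityShift

theorem additive_shift_is_strictly_supermodular_general
    {ι : Type*} [Fintype ι] [DecidableEq ι]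
    (ν μ : Finset ι → ℝ) (η : ℕ → ℝ)
    (hν1 : ν Finset.univ = 1)
    (hνrange : ∀ A : Finset ι, 0 ≤ ν A ∧ ν A ≤ 1)
    (hνadd : ∀ A B : Finset ι, Disjoint A B → ν (A ∪ B) = ν A + ν B)
    (hη0 : 0 < η 1)
    (hηmono : ∀ t : ℕ, 1 ≤ t → t + 1 ≤ Fintype.card ι - 1 → η t < η (t + 1))
    (hηsum : ∀ i : ι, (∑ t ∈ Finset.Icc 1 (Fintype.card ι - 1), η t) < ν {i})
    (hμ0 : μ ∅ = 0) (hμ1 : μ Finset.univ = 1)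
    (hμ : ∀ A : Finset ι, A ≠ ∅ → A ≠ Finset.univ →
      μ A = ν A - ∑ t ∈ Finset.Icc A.card (Fintype.card ι - 1), η t) :
    (∀ A B : Finset ι, A ⊆ B → μ A ≤ μ B) ∧
    (∀ A : Finset ι, 0 ≤ μ A ∧ μ A ≤ 1) ∧
    (∀ A B : Finset ι, ¬ A ⊆ B → ¬ B ⊆ A →
      μ (A ∪ B) + μ (A ∩ B) > μ A + μ B) := by
  have hIcc : ∀ k, 0 < Fintype.card ι → Icc k (Fintype.card ι - 1) = Ico k (Fintype.card ι) :=
    fun k hn ↦ Icc_sub_one_right_eq_Ico_of_not_isMin (by simpa using hn.ne') k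
  have hμ' : ∀ A, A.Nonempty → μ A = ν A - ∑ t ∈ Ico #A (Fintype.card ι), η t := by
    intro A hA
    by_cases hU : A = univ
    · simp [hU, hμ1, hν1]
    · rw [hμ A hA.ne_empty hU, hIcc _ (hA.card_pos.trans_le (card_le_univ A))]
  have hηmono' : StrictMonoOn η (Set.Ico 1 (Fintype.card ι)) :=
    strictMonoOn_of_lt_succ Set.ordConnected_Ico fun t _ ht ht' ↦ by
      simp only [Order.succ_eq_add_one, Set.mem_Ico] at ht ht' ⊢
      exact hηmono t ht.1 (by omega)
  have hηpos : ∀ t ∈ Ico 1 (Fintype.card ι), 0 < η t := fun t ht ↦ by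
    rw [mem_Ico] at ht
    exact hη0.trans_le (hηmono'.monotoneOn ⟨le_rfl, by omega⟩ ⟨ht.1, ht.2⟩ ht.1)
  have hsingleton : ∀ i, ∑ t ∈ Ico 1 (Fintype.card ι), η t < ν {i} := fun i ↦
    hIcc 1 (Fintype.card_pos_iff.2 ⟨i⟩) ▸ hηsum i
  have hνmono := monotone_of_additive (fun A ↦ (hνrange A).1) hνadd
  have hμmono := monotone_of_shift hνmono (fun t ht ↦ (hηpos t ht).le) hsingleton hμ0 hμ'
  refine ⟨fun _ _ ↦ (hμmono ·), fun A ↦ ?_,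
    fun _ _ ↦ strict_supermodular_of_shift hνadd hηpos hηmono' hμ0 hμ'⟩
  exact ⟨hμ0 ▸ hμmono (empty_subset A), hμ1 ▸ hμmono (subset_univ A)⟩

/-- Strategy (S2): cascading subtraction of increasing amounts η_t from an additive
measure with strictly positive singleton values yields a strictly supermodular
fuzzy measure. -/
theorem additive_shift_is_strictly_supermodular
    {ι : Type*} [Fintype ι] [DecidableEq ι]
    (hn : 3 ≤ Fintype.card ι)
    (ν μ : Finset ι → ℝ) (η : ℕ → ℝ)
    (hν0 : ν ∅ = 0) (hν1 : ν Finset.univ = 1)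
    (hνrange : ∀ A : Finset ι, 0 ≤ ν A ∧ ν A ≤ 1)
    (hνadd : ∀ A B : Finset ι, Disjoint A B → ν (A ∪ B) = ν A + ν B)
    (hpos : ∀ i : ι, 0 < ν {i})
    (hη0 : 0 < η 1)
    (hηmono : ∀ t : ℕ, 1 ≤ t → t + 1 ≤ Fintype.card ι - 1 → η t < η (t + 1))
    (hηsum : ∀ i : ι, (∑ t ∈ Finset.Icc 1 (Fintype.card ι - 1), η t) < ν {i})
    (hμ0 : μ ∅ = 0) (hμ1 : μ Finset.univ = 1)
    (hμ : ∀ A : Finset ι, A ≠ ∅ → A ≠ Finset.univ →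
      μ A = ν A - ∑ t ∈ Finset.Icc A.card (Fintype.card ι - 1), η t) :
    (∀ A B : Finset ι, A ⊆ B → μ A ≤ μ B) ∧
    (∀ A : Finset ι, 0 ≤ μ A ∧ μ A ≤ 1) ∧
    (∀ A B : Finset ι, ¬ A ⊆ B → ¬ B ⊆ A →
      μ (A ∪ B) + μ (A ∩ B) > μ A + μ B) :=
  additive_shift_is_strictly_supermodular_general ν μ η hν1 hνrange hνadd hη0 hηmono hηsum hμ0 hμ1
    hμ
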